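/- For the DNLS flow with periodic boundary conditions, the quantity J(q) = Σ_{n=0}^{N−1} \overline{q_n}(q_{n+1} + q_{n−1}) takes real values along solutions and is a constant of motion: d/dt J(q(t)) = 0 along any solution of the DNLS. -/

import Mathlib

/-!
Write `⟪x, y⟫ = Σₙ conj (xₙ) yₙ` and `L x = x(· + 1) + x(· - 1)`, so that `J(q) = ⟪q, L q⟫`.
Since the shift by `1` has the shift by `-1` as its adjoint, `L` is self-adjoint and `J` is real.
For the same reason `dJ/dt = ⟪q̇, L q⟫ + ⟪L q, q̇⟫ = 2 Re ⟪q̇, L q⟫`. The DNLS reads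
`q̇ₙ = -i ((h⁻² + |qₙ|²) (L q)ₙ - (2h⁻² + 2ω²) qₙ)` with real coefficients, so
`⟪q̇, L q⟫ = i (Σₙ (h⁻² + |qₙ|²) |(L q)ₙ|² - (2h⁻² + 2ω²) J)` is purely imaginary.
-/

open Finset ComplexConjugate

namespace DNLS

variable {G : Type*} [Fintype G]

def pairing (x y : G → ℂ) : ℂ := ∑ n, conj (x n) * y n

theorem conj_pairing (x y : G → ℂ) : conj (pairing x y) = pairing y x := by
  simp only [pairing, map_sum, map_mul, Complex.conj_conj, mul_comm]

theorem re_pairing_neg_I_mul (w y : G → ℂ) :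
    (pairing (fun n => -Complex.I * w n) y).re = -(pairing w y).im := by
  simp only [pairing, map_mul, map_neg, Complex.conj_I, neg_neg, mul_assoc, ← mul_sum,
    Complex.I_re, Complex.mul_re, Complex.I_im, zero_mul, one_mul, zero_sub]

theorem hasDerivAt_pairing {p q : G → ℝ → ℂ} {p' q' : G → ℂ} {t : ℝ}
    (hp : ∀ n, HasDerivAt (p n) (p' n) t) (hq : ∀ n, HasDerivAt (q n) (q' n) t) :
    HasDerivAt (fun s => pairing (p · s) (q · s)) (pairing p' (q · t) + pairing (p · t) q') t := by
  simp only [pairing, ← sum_add_distrib]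
  exact HasDerivAt.fun_sum fun n _ => ((hp n).star).mul (hq n)

variable [AddGroup G]

def hopping (a : G) (x : G → ℂ) : G → ℂ := fun n => x (n + a) + x (n - a)

theorem pairing_hopping (a : G) (x y : G → ℂ) :
    pairing x (hopping a y) = pairing (hopping a x) y := by
  have forward : ∑ n, conj (x n) * y (n + a) = ∑ n, conj (x (n - a)) * y n :=
    (Equiv.sum_comp (Equiv.subRight a) fun n => conj (x n) * y (n + a)).symm.trans (by simp)
  have backward : ∑ n, conj (x n) * y (n - a) = ∑ n, conj (x (n + a)) * y n :=
    (Equiv.sum_comp (Equiv.addRight a) fun n => conj (x n) * y (n - a)).symm.trans (by simp)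
  simp only [pairing, hopping, mul_add, add_mul, map_add, sum_add_distrib, forward, backward,
    add_comm]

theorem im_pairing_hopping_self (a : G) (x : G → ℂ) : (pairing x (hopping a x)).im = 0 := by
  rw [← Complex.conj_eq_iff_im, conj_pairing, pairing_hopping]

theorem re_pairing_hopping_of_real_coeffs (a : G) (r : G → ℝ) (c : ℝ) (x : G → ℂ) :
    (pairing (fun n => -Complex.I * (r n * hopping a x n + c * x n)) (hopping a x)).re = 0 := by
  have expand : pairing (fun n => r n * hopping a x n + c * x n) (hopping a x)
      = ∑ n, (r n * Complex.normSq (hopping a x n) : ℂ) + c * pairing x (hopping a x) := by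
    simp only [pairing, mul_sum, ← sum_add_distrib, map_add, map_mul, Complex.conj_ofReal,
      add_mul]
    refine sum_congr rfl fun n _ => by rw [Complex.normSq_eq_conj_mul_self]; ring
  rw [re_pairing_neg_I_mul, expand, Complex.add_im, Complex.mul_im, im_pairing_hopping_self]
  simp

theorem hasDerivAt_pairing_hopping_self (a : G) {p : G → ℝ → ℂ} {p' : G → ℂ} {t : ℝ}
    (hp : ∀ n, HasDerivAt (p n) (p' n) t) :
    HasDerivAt (fun s => pairing (p · s) (hopping a (p · s)))
      (2 * (pairing p' (hopping a (p · t))).re) t := by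
  have hLp : ∀ n, HasDerivAt (fun s => hopping a (p · s) n) (hopping a p' n) t :=
    fun n => (hp (n + a)).add (hp (n - a))
  convert hasDerivAt_pairing hp hLp using 1
  rw [pairing_hopping a (p · t), ← conj_pairing p' (hopping a (p · t))]
  exact_mod_cast (Complex.add_conj _).symm

end DNLS

open DNLS in
theorem dnls_J_real_constant_of_motion_general (N : ℕ) [NeZero N] (ω h : ℝ)
    (q : ZMod N → ℝ → ℂ)
    (hq : ∀ (n : ZMod N) (t : ℝ), HasDerivAt (q n)
      (-Complex.I * ((1 / (h : ℂ)^2) * (q (n+1) t - 2 * q n t + q (n-1) t)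
        + ((‖q n t‖ : ℂ))^2 * (q (n+1) t + q (n-1) t)
        - 2 * (ω : ℂ)^2 * q n t)) t) :
    ∀ t : ℝ,
      (∑ n : ZMod N, (starRingEnd ℂ) (q n t) * (q (n+1) t + q (n-1) t)).im = 0 ∧
      HasDerivAt
        (fun s => ∑ n : ZMod N, (starRingEnd ℂ) (q n s) * (q (n+1) s + q (n-1) s))
        0 t := by
  intro t
  have hdnls : ∀ n, HasDerivAt (q n) (-Complex.I * (((1 / h ^ 2 + ‖q n t‖ ^ 2 : ℝ) : ℂ)
      * hopping 1 (q · t) n + ((-(2 / h ^ 2 + 2 * ω ^ 2) : ℝ) : ℂ) * q n t)) t := fun n => by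
    convert hq n t using 2
    simp only [hopping]
    push_cast
    ring
  refine ⟨im_pairing_hopping_self 1 (q · t), ?_⟩
  have hJ := hasDerivAt_pairing_hopping_self 1 hdnls
  rwa [re_pairing_hopping_of_real_coeffs, Complex.ofReal_zero, mul_zero] at hJ

/-- `J(q) = Σ conj(q_n)(q_{n+1} + q_{n−1})` is real valued and a constant of motion
along solutions of the DNLS with periodic boundary conditions. -/
theorem dnls_J_real_constant_of_motion (N : ℕ) [NeZero N] (ω h : ℝ)
    (hh : h = 1 / (N : ℝ)) (q : ZMod N → ℝ → ℂ)
    (hq : ∀ (n : ZMod N) (t : ℝ), HasDerivAt (q n)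
      (-Complex.I * ((1 / (h : ℂ)^2) * (q (n+1) t - 2 * q n t + q (n-1) t)
        + ((‖q n t‖ : ℂ))^2 * (q (n+1) t + q (n-1) t)
        - 2 * (ω : ℂ)^2 * q n t)) t) :
    ∀ t : ℝ,
      (∑ n : ZMod N, (starRingEnd ℂ) (q n t) * (q (n+1) t + q (n-1) t)).im = 0 ∧
      HasDerivAt
        (fun s => ∑ n : ZMod N, (starRingEnd ℂ) (q n s) * (q (n+1) s + q (n-1) s))
        0 t :=
  dnls_J_real_constant_of_motion_general N ω h q hq
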